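/- Let (μ : M → P) be a crossed module and let G = P ⋉ M be the semidirect product with multiplication (p,m)(p′,m′) = (pp′, (m^{p′}) m′). Define e : P → G, p ↦ (p, 1), and t, h : G → P by t(p,m) = p and h(p,m) = p · μ(m). Then h is a group homomorphism, t ∘ e = h ∘ e = id_P, and the commutator subgroup [ker t, ker h] is trivial; that is, (e; t, h : G → P) is a cat¹-group. -/

import Mathlib

universe u

/-! `t a = 1` and `h b = 1` force `a = (1, m)` and `b = ((μ n)⁻¹, n)`. By CM2, acting by
`(μ n)⁻¹` is conjugation by `n⁻¹`, so both products `a b` and `b a` equal `((μ n)⁻¹, n m)`.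
That `h` is multiplicative is CM1, which makes `μ` intertwine the action with conjugation. -/

/-- A crossed module `(μ : M → P)`: groups `M`, `P`, a (right) action of `P` on `M` by
group automorphisms, written `act m p` for `m ^ p`, and a homomorphism `μ : M →* P`
satisfying CM1: `μ (m ^ p) = p⁻¹ * μ m * p` and CM2: `n ^ (μ m) = m⁻¹ * n * m`. -/
structure CrossedModule (M P : Type u) [Group M] [Group P] where
  μ : M →* P
  act : M → P → M
  act_mul : ∀ m n p, act (m * n) p = act m p * act n p
  act_one : ∀ m, act m 1 = m
  act_act : ∀ m p q, act (act m p) q = act m (p * q)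
  cm1 : ∀ m p, μ (act m p) = p⁻¹ * μ m * p
  cm2 : ∀ m n, act n (μ m) = m⁻¹ * n * m

namespace CrossedModule

variable {M P : Type u} [Group M] [Group P] (X : CrossedModule M P)

lemma act_one_left (p : P) : X.act 1 p = 1 := by
  simpa using X.act_mul 1 1 p

lemma mul_μ_act (m : M) (p : P) : p * X.μ (X.act m p) = X.μ m * p := by
  rw [X.cm1]
  group

lemma act_inv_μ (m n : M) : X.act m (X.μ n)⁻¹ = n * m * n⁻¹ :=
  calc X.act m (X.μ n)⁻¹ = X.act (X.act (n * m * n⁻¹) (X.μ n)) (X.μ n)⁻¹ := by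
        rw [X.cm2]; group
    _ = n * m * n⁻¹ := by rw [X.act_act, mul_inv_cancel, X.act_one]

end CrossedModule

section Semidirect

variable {M P : Type u} [Group M] [Group P] (X : CrossedModule M P) {G : Type*} [Group G]
  {pair : P → M → G}

lemma pair_one_mul_pair_one
    (hmul : ∀ p p' m m', pair p m * pair p' m' = pair (p * p') (X.act m p' * m')) (p q : P) :
    pair p 1 * pair q 1 = pair (p * q) 1 := by
  rw [hmul, X.act_one_left, one_mul]

lemma commute_pair_one_pair_inv_μ
    (hmul : ∀ p p' m m', pair p m * pair p' m' = pair (p * p') (X.act m p' * m')) (m n : M) :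
    Commute (pair 1 m) (pair (X.μ n)⁻¹ n) := by
  rw [Commute, SemiconjBy, hmul, hmul, one_mul, mul_one, X.act_one, X.act_inv_μ]
  group

end Semidirect

theorem semidirect_product_is_cat1 {M P : Type u} [Group M] [Group P] (X : CrossedModule M P)
    (G : Type u) [Group G] (pair : P → M → G)
    (hbij : Function.Bijective fun pm : P × M => pair pm.1 pm.2)
    (hmul : ∀ (p p' : P) (m m' : M),
      pair p m * pair p' m' = pair (p * p') (X.act m p' * m'))
    (t h : G → P)
    (ht : ∀ p m, t (pair p m) = p)
    (hh : ∀ p m, h (pair p m) = p * X.μ m) :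
    (∀ a b : G, t (a * b) = t a * t b) ∧
    (∀ a b : G, h (a * b) = h a * h b) ∧
    (∀ p q : P, pair (p * q) 1 = pair p 1 * pair q 1) ∧
    (∀ p : P, t (pair p 1) = p ∧ h (pair p 1) = p) ∧
    (∀ a b : G, t a = 1 → h b = 1 → a * b = b * a) := by
  refine ⟨hbij.surjective.forall₂.2 fun ⟨p, m⟩ ⟨q, n⟩ => ?_,
    hbij.surjective.forall₂.2 fun ⟨p, m⟩ ⟨q, n⟩ => ?_,
    fun p q => (pair_one_mul_pair_one X hmul p q).symm,
    fun p => ⟨ht p 1, by rw [hh, map_one, mul_one]⟩,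
    hbij.surjective.forall₂.2 fun ⟨p, m⟩ ⟨q, n⟩ hta hhb => ?_⟩
  · dsimp only
    rw [hmul, ht, ht, ht]
  · dsimp only
    rw [hmul, hh, hh, hh, map_mul, ← mul_assoc, mul_assoc p, X.mul_μ_act]
    group
  · dsimp only at hta hhb ⊢
    rw [ht] at hta
    rw [hh] at hhb
    obtain rfl := hta
    obtain rfl : q = (X.μ n)⁻¹ := eq_inv_of_mul_eq_one_left hhb
    exact (commute_pair_one_pair_inv_μ X hmul m n).eq
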